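/- Define R(α,n,λ) as the error term so that α Σ_{j=0}^n C(αn,αj) λ^{αj} = (1+λ)^{αn} − R(α,n,λ). Then for α ∈ (1,2), n ≥ 1, and λ ∈ (0,1], one has 0 > R(α,n,λ) > 1 − α > −1. -/

import Mathlib

/-- The error term `R(α,n,λ)` in the optimal neo-classical identity. -/
noncomputable def Rerr (α : ℝ) (n : ℕ) (lam : ℝ) : ℝ :=
  α * lam ^ α * Real.sin (α * Real.pi) / Real.pi *
    ∫ t in (0:ℝ)..1, t ^ (α - 1) * (1 - t) ^ (α * n) *
      (1 / (t ^ (2 * α) - 2 * t ^ α * lam ^ α * Real.cos (α * Real.pi) + lam ^ (2 * α)) +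
       lam ^ (α * n) /
         (1 - 2 * (lam * t) ^ α * Real.cos (α * Real.pi) + (lam * t) ^ (2 * α)))

/-!
With `θ = (2 - α)π ∈ (0, π)` and `μ = λ^α`, completing the squares in the two denominators
writes `R = -(α μ sin θ / π) ∫₀¹ (1 - t)^{αn} (K₁ + μⁿ K₂)`, where `K₁, K₂ > 0` are integrands of
the form `t^{α-1} / ((k t^α - d)² + e²)`, each with an arctangent primitive. Dropping the weights
`(1 - t)^{αn} < 1` and `μⁿ ≤ 1` strictly increases the integral to `∫₀¹ (K₁ + K₂)`, and the four
arctangents add up to `π - θ = (α - 1)π`, so that `(α μ sin θ / π) ∫₀¹ (K₁ + K₂) = α - 1`.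
-/

open Real Set intervalIntegral

noncomputable def arctanKernel (α k d e t : ℝ) : ℝ :=
  t ^ (α - 1) / ((k * t ^ α - d) ^ 2 + e ^ 2)

section arctanKernel

variable {α k d e : ℝ}

lemma arctanKernel_pos {t : ℝ} (ht : 0 < t) (he : e ≠ 0) : 0 < arctanKernel α k d e t := by
  unfold arctanKernel
  have := rpow_pos_of_pos ht (α - 1)
  positivity

lemma continuous_arctanKernel (hα : 1 ≤ α) (he : e ≠ 0) : Continuous (arctanKernel α k d e) := by
  have hden : ∀ t : ℝ, (k * t ^ α - d) ^ 2 + e ^ 2 ≠ 0 := fun t => by positivity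
  exact (continuous_rpow_const (by linarith)).div
    (((continuous_const.mul (continuous_rpow_const (by linarith))).sub continuous_const).pow 2
      |>.add continuous_const) hden

lemma hasDerivAt_arctanKernel_primitive (hα : 1 ≤ α) (hk : k ≠ 0) (he : e ≠ 0) (t : ℝ) :
    HasDerivAt (fun t => arctan ((k * t ^ α - d) / e) / (α * k * e))
      (arctanKernel α k d e t) t := by
  have hα0 : α ≠ 0 := by positivity
  have h := (((hasDerivAt_rpow_const (x := t) (Or.inr hα)).const_mul k).sub_const d).div_const e
  refine (h.arctan.div_const (α * k * e)).congr_deriv ?_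
  have hden : (k * t ^ α - d) ^ 2 + e ^ 2 ≠ 0 := by positivity
  unfold arctanKernel
  field_simp
  ring

lemma integral_arctanKernel (hα : 1 ≤ α) (hk : k ≠ 0) (he : e ≠ 0) (a b : ℝ) :
    ∫ t in a..b, arctanKernel α k d e t =
      (arctan ((k * b ^ α - d) / e) - arctan ((k * a ^ α - d) / e)) / (α * k * e) := by
  rw [integral_eq_sub_of_hasDerivAt (fun t _ => hasDerivAt_arctanKernel_primitive hα hk he t)
    ((continuous_arctanKernel hα he).intervalIntegrable a b)]
  exact (sub_div _ _ _).symm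

end arctanKernel

lemma arctan_cos_div_sin {θ : ℝ} (hθ0 : 0 < θ) (hθπ : θ < π) :
    arctan (cos θ / sin θ) = π / 2 - θ := by
  rw [← cos_pi_div_two_sub, ← sin_pi_div_two_sub, ← tan_eq_sin_div_cos]
  exact arctan_tan (by linarith) (by linarith)

lemma arctan_add_arctan_cos_div_sin {θ μ : ℝ} (hθ0 : 0 < θ) (hθπ : θ < π) (hμ : 0 < μ)
    (hμc : μ * cos θ < 1) :
    arctan ((1 - μ * cos θ) / (μ * sin θ)) + arctan (cos θ / sin θ) +
      (arctan ((μ - cos θ) / sin θ) + arctan (cos θ / sin θ)) = π - θ := by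
  set c := cos θ
  set s := sin θ
  have hs : 0 < s := sin_pos_of_pos_of_lt_pi hθ0 hθπ
  have hcs : c ^ 2 + s ^ 2 = 1 := cos_sq_add_sin_sq θ
  have hprod : (μ - c) / s * (c / s) < 1 := by
    rw [div_mul_div_comm, div_lt_one (by positivity)]
    nlinarith
  have hsum : arctan ((μ - c) / s) + arctan (c / s) = arctan (μ * s / (1 - μ * c)) := by
    have hμc' : 1 - μ * c ≠ 0 := by linarith
    rw [arctan_add hprod]
    congr 1
    field_simp
    rw [show s ^ 2 - c * (μ - c) = 1 - μ * c by linear_combination hcs, sub_add_cancel,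
      mul_div_cancel_right₀ _ hμc']
  have hinv : arctan ((1 - μ * c) / (μ * s)) = π / 2 - arctan (μ * s / (1 - μ * c)) := by
    rw [← arctan_inv_of_pos (div_pos (mul_pos hμ hs) (by linarith)), inv_div]
  rw [hsum, hinv, arctan_cos_div_sin hθ0 hθπ]
  ring

lemma integral_arctanKernel_add {α θ μ : ℝ} (hα : 1 ≤ α) (hθ0 : 0 < θ) (hθπ : θ < π)
    (hμ : 0 < μ) (hμc : μ * cos θ < 1) :
    ∫ t in (0:ℝ)..1, arctanKernel α 1 (μ * cos θ) (μ * sin θ) t +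
        arctanKernel α μ (cos θ) (sin θ) t =
      (π - θ) / (α * μ * sin θ) := by
  have hs : 0 < sin θ := sin_pos_of_pos_of_lt_pi hθ0 hθπ
  have hα0 : 0 < α := by linarith
  rw [integral_add ((continuous_arctanKernel hα (by positivity)).intervalIntegrable 0 1)
      ((continuous_arctanKernel hα hs.ne').intervalIntegrable 0 1),
    integral_arctanKernel hα one_ne_zero (by positivity),
    integral_arctanKernel hα hμ.ne' hs.ne', one_rpow, zero_rpow hα0.ne',
    ← arctan_add_arctan_cos_div_sin hθ0 hθπ hμ hμc]
  have hμcs : -(μ * cos θ) / (μ * sin θ) = -(cos θ / sin θ) := by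
    rw [neg_div, mul_div_mul_left _ _ hμ.ne']
  simp only [mul_zero, zero_sub, one_mul, neg_div, hμcs, arctan_neg, sub_neg_eq_add]
  field_simp

lemma integral_one_sub_rpow_mul_pos_and_lt {f g : ℝ → ℝ} {β ν : ℝ} (hf : Continuous f)
    (hg : Continuous g) (hf0 : ∀ t ∈ Ioo (0:ℝ) 1, 0 < f t) (hg0 : ∀ t ∈ Ioo (0:ℝ) 1, 0 < g t)
    (hβ : 0 < β) (hν0 : 0 < ν) (hν1 : ν ≤ 1) :
    0 < ∫ t in (0:ℝ)..1, (1 - t) ^ β * (f t + ν * g t) ∧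
      ∫ t in (0:ℝ)..1, (1 - t) ^ β * (f t + ν * g t) < ∫ t in (0:ℝ)..1, f t + g t := by
  have hpt : ∀ t ∈ Ioo (0:ℝ) 1,
      0 < (1 - t) ^ β * (f t + ν * g t) ∧ (1 - t) ^ β * (f t + ν * g t) < f t + g t := by
    intro t ht
    have hw0 : 0 < (1 - t) ^ β := rpow_pos_of_pos (by linarith [ht.2]) β
    have hw1 : (1 - t) ^ β < 1 := rpow_lt_one (by linarith [ht.2]) (by linarith [ht.1]) hβ
    have hft := hf0 t ht
    have hgt := hg0 t ht
    constructor
    · positivity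
    · nlinarith [mul_le_mul_of_nonneg_right hν1 hgt.le]
  have hweighted : Continuous fun t : ℝ => (1 - t) ^ β * (f t + ν * g t) :=
    ((continuous_const.sub continuous_id).rpow_const fun _ => Or.inr hβ.le).mul
      (hf.add (continuous_const.mul hg))
  refine ⟨intervalIntegral_pos_of_pos_on (hweighted.intervalIntegrable 0 1)
    (fun t ht => (hpt t ht).1) one_pos, ?_⟩
  have hsum : Continuous fun t => f t + g t := hf.add hg
  rw [← sub_pos, ← integral_sub (hsum.intervalIntegrable 0 1) (hweighted.intervalIntegrable 0 1)]
  exact intervalIntegral_pos_of_pos_on ((hsum.sub hweighted).intervalIntegrable 0 1)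
    (fun t ht => sub_pos.2 (hpt t ht).2) one_pos

lemma Rerr_eq {α lam : ℝ} (n : ℕ) (hl : 0 ≤ lam) :
    Rerr α n lam = -(α * lam ^ α * sin ((2 - α) * π) / π) *
      ∫ t in (0:ℝ)..1, (1 - t) ^ (α * n) *
        (arctanKernel α 1 (lam ^ α * cos ((2 - α) * π)) (lam ^ α * sin ((2 - α) * π)) t +
          (lam ^ α) ^ n * arctanKernel α (lam ^ α) (cos ((2 - α) * π)) (sin ((2 - α) * π)) t) := by
  have hcos : cos ((2 - α) * π) = cos (α * π) := by
    rw [sub_mul, cos_two_pi_sub]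
  have hsin : sin ((2 - α) * π) = -sin (α * π) := by
    rw [sub_mul, sin_two_pi_sub]
  have hcs := cos_sq_add_sin_sq (α * π)
  unfold Rerr
  rw [hcos, hsin, show -(α * lam ^ α * -sin (α * π) / π) = α * lam ^ α * sin (α * π) / π by ring]
  congr 1
  refine integral_congr fun t ht => ?_
  have ht0 : 0 ≤ t := by rw [uIcc_of_le zero_le_one] at ht; exact ht.1
  have hsq : ∀ {x : ℝ}, 0 ≤ x → x ^ (2 * α) = (x ^ α) ^ 2 := fun hx => by
    rw [mul_comm, rpow_mul hx, rpow_two]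
  simp only [arctanKernel, hsq ht0, hsq hl, hsq (mul_nonneg hl ht0), mul_rpow hl ht0,
    rpow_mul hl, rpow_natCast]
  have h1 : (t ^ α) ^ 2 - 2 * t ^ α * lam ^ α * cos (α * π) + (lam ^ α) ^ 2 =
      (1 * t ^ α - lam ^ α * cos (α * π)) ^ 2 + (lam ^ α * -sin (α * π)) ^ 2 := by
    linear_combination (-(lam ^ α) ^ 2) * hcs
  have h2 : 1 - 2 * (lam ^ α * t ^ α) * cos (α * π) + (lam ^ α * t ^ α) ^ 2 =
      (lam ^ α * t ^ α - cos (α * π)) ^ 2 + (-sin (α * π)) ^ 2 := by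
    linear_combination -hcs
  rw [h1, h2]
  ring

/-- Bound on the error term for `1 < α < 2`. -/
theorem Rerr_bound_neg (α : ℝ) (hα1 : 1 < α) (hα2 : α < 2)
    (n : ℕ) (hn : 1 ≤ n) (lam : ℝ) (hl0 : 0 < lam) (hl1 : lam ≤ 1) :
    Rerr α n lam < 0 ∧ 1 - α < Rerr α n lam ∧ (-1 : ℝ) < 1 - α := by
  rw [Rerr_eq n hl0.le]
  set θ := (2 - α) * π with hθ
  set μ := lam ^ α
  have hθ0 : 0 < θ := mul_pos (by linarith) pi_pos
  have hθπ : θ < π := by nlinarith [pi_pos]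
  have hs : 0 < sin θ := sin_pos_of_pos_of_lt_pi hθ0 hθπ
  have hμ0 : 0 < μ := rpow_pos_of_pos hl0 α
  have hμ1 : μ ≤ 1 := rpow_le_one hl0.le hl1 (by linarith)
  have hc : cos θ < 1 := by nlinarith [cos_sq_add_sin_sq θ, neg_one_le_cos θ]
  have hμc : μ * cos θ < 1 := by nlinarith [neg_one_le_cos θ]
  obtain ⟨hJ0, hJ⟩ := integral_one_sub_rpow_mul_pos_and_lt
    (continuous_arctanKernel (k := 1) (d := μ * cos θ) (e := μ * sin θ) hα1.le (by positivity))
    (continuous_arctanKernel (k := μ) (d := cos θ) hα1.le hs.ne')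
    (fun t ht => arctanKernel_pos (e := μ * sin θ) ht.1 (by positivity))
    (fun t ht => arctanKernel_pos ht.1 hs.ne')
    (β := α * n) (mul_pos (by linarith) (by exact_mod_cast hn)) (pow_pos hμ0 n)
    (pow_le_one₀ hμ0.le hμ1)
  rw [integral_arctanKernel_add hα1.le hθ0 hθπ hμ0 hμc, lt_div_iff₀ (by positivity)] at hJ
  have hcoef : 0 < α * μ * sin θ / π := by positivity
  refine ⟨by linarith [mul_pos hcoef hJ0], ?_, by linarith⟩
  rw [neg_mul, lt_neg, div_mul_eq_mul_div, div_lt_iff₀ pi_pos]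
  linarith
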